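/- arXiv:2411.03138 — 4 statements merged into one kernel-verified Lean document; each statement's English description precedes it below -/
import Mathlib

section
/- Let X be a set, U0 a sample space with probability measure Pr, f: X → ℝ, h a cost function, 𝒴(x,u) feasible sets, and ε ∈ (0,1). Define O as the optimal value of the chance-constrained problem min_{x∈X, η} f(x) + η subject to Pr[min_{y∈𝒴(x,u)} h(y) ≤ η] ≥ 1 − ε, and for any uncertainty set 𝒰 ⊆ U0 define O_𝒰 as the optimal value of min_{x∈X} { f(x) + max_{u∈𝒰} min_{y∈𝒴(x,u)} h(y) }. For x ∈ X let O_x := f(x) + min{ η : Pr[min_{y∈𝒴(x,u)} h(y) ≤ η] ≥ 1 − ε }. If 𝒰 satisfies Pr[u ∈ 𝒰] ≥ 1 − ε and (x*,η*) and x_𝒰* are optimal for the two problems respectively, then O = O_{x*} ≤ O_{x_𝒰*} ≤ O_𝒰. -/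
/-!
The `(1-ε)`-quantile `q x` is the cheapest `η` making `(x, η)` feasible for the chance
constraint, so the chance-constrained optimum is `min_x (f x + q x)`, attained at `x*`. On the
other hand every `u ∈ 𝒰` has cost at most the worst case `g x`, so `{φ x ≤ g x}` contains `𝒰` and
has probability at least `1 - ε`; hence `q x ≤ g x` for every `x`, in particular at `x𝒰*`.
-/

open MeasureTheory

section ChanceConstraint

variable {U : Type*} [MeasurableSpace U] {μ : Measure U} {c : ENNReal}

theorem quantile_le_of_isGreatest_image {ψ : U → ℝ} {S : Set U} {q m : ℝ}
    (hS : c ≤ μ S) (hq : IsLeast {η : ℝ | c ≤ μ {u | ψ u ≤ η}} q)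
    (hm : IsGreatest (ψ '' S) m) : q ≤ m :=
  hq.2 <| hS.trans <| measure_mono fun u hu => hm.2 ⟨u, hu, rfl⟩

variable {X : Type*} {f : X → ℝ} {φ : X → U → ℝ} {O : ℝ}

theorem chanceValue_le_add_quantile
    (hO : IsLeast {v : ℝ | ∃ x η, c ≤ μ {u | φ x u ≤ η} ∧ v = f x + η} O)
    {x : X} {q : ℝ} (hq : IsLeast {η : ℝ | c ≤ μ {u | φ x u ≤ η}} q) :
    O ≤ f x + q :=
  hO.2 ⟨x, q, hq.1, rfl⟩

theorem chanceValue_eq_add_quantile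
    (hO : IsLeast {v : ℝ | ∃ x η, c ≤ μ {u | φ x u ≤ η} ∧ v = f x + η} O)
    {x : X} {η q : ℝ} (hq : IsLeast {η : ℝ | c ≤ μ {u | φ x u ≤ η}} q)
    (hxη : c ≤ μ {u | φ x u ≤ η} ∧ O = f x + η) :
    O = f x + q :=
  le_antisymm (chanceValue_le_add_quantile hO hq)
    (hxη.2 ▸ add_le_add_right (hq.2 hxη.1) _)

end ChanceConstraint

theorem stmt_0_general
    {U : Type*} [MeasurableSpace U] (P : Measure U)
    {X : Type*} (f : X → ℝ) (φ : X → U → ℝ)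
    (ε : ℝ)
    (𝒰 : Set U) (h𝒰 : ENNReal.ofReal (1 - ε) ≤ P 𝒰)
    -- worst-case second-stage cost, attained for every x
    (g : X → ℝ) (hg : ∀ x, IsGreatest ((φ x) '' 𝒰) (g x))
    -- (1-ε)-quantile of the second-stage cost, attained for every x
    (q : X → ℝ)
    (hq : ∀ x, IsLeast {η : ℝ | ENNReal.ofReal (1 - ε) ≤ P {u | φ x u ≤ η}} (q x))
    -- optimal value and solution of the chance-constrained problem
    (O : ℝ) (xstar : X) (ηstar : ℝ)
    (hO : IsLeast {v : ℝ | ∃ x η, ENNReal.ofReal (1 - ε) ≤ P {u | φ x u ≤ η} ∧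
      v = f x + η} O)
    (hOatt : ENNReal.ofReal (1 - ε) ≤ P {u | φ xstar u ≤ ηstar} ∧ O = f xstar + ηstar)
    -- optimal value and solution of the robust problem
    (OU : ℝ) (xU : X)
    (hOUatt : OU = f xU + g xU)
    -- performance measures O_x := f x + q x
    (Oxstar OxU : ℝ)
    (hOxstar : Oxstar = f xstar + q xstar) (hOxU : OxU = f xU + q xU) :
    O = Oxstar ∧ Oxstar ≤ OxU ∧ OxU ≤ OU := by
  have hOeq : O = Oxstar := hOxstar ▸ chanceValue_eq_add_quantile hO (hq xstar) hOatt
  refine ⟨hOeq, ?_, ?_⟩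
  · exact hOeq ▸ hOxU ▸ chanceValue_le_add_quantile hO (hq xU)
  · rw [hOxU, hOUatt]
    exact add_le_add_right (quantile_le_of_isGreatest_image h𝒰 (hq xU) (hg xU)) _

/-- Lemma 1, part 1: with a chance-constrained optimum `(x*, η*)` and a robust
optimum `x𝒰*` over an uncertainty set `𝒰` with `Pr[u ∈ 𝒰] ≥ 1 - ε`,
we have `O = O_{x*} ≤ O_{x𝒰*} ≤ O_𝒰`. -/
theorem stmt_0
    {U : Type*} [MeasurableSpace U] (P : Measure U) [IsProbabilityMeasure P]
    {X : Type*} (f : X → ℝ) (φ : X → U → ℝ)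
    (ε : ℝ) (hε : ε ∈ Set.Ioo (0 : ℝ) 1)
    (𝒰 : Set U) (h𝒰 : ENNReal.ofReal (1 - ε) ≤ P 𝒰)
    -- worst-case second-stage cost, attained for every x
    (g : X → ℝ) (hg : ∀ x, IsGreatest ((φ x) '' 𝒰) (g x))
    -- (1-ε)-quantile of the second-stage cost, attained for every x
    (q : X → ℝ)
    (hq : ∀ x, IsLeast {η : ℝ | ENNReal.ofReal (1 - ε) ≤ P {u | φ x u ≤ η}} (q x))
    -- optimal value and solution of the chance-constrained problem
    (O : ℝ) (xstar : X) (ηstar : ℝ)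
    (hO : IsLeast {v : ℝ | ∃ x η, ENNReal.ofReal (1 - ε) ≤ P {u | φ x u ≤ η} ∧
      v = f x + η} O)
    (hOatt : ENNReal.ofReal (1 - ε) ≤ P {u | φ xstar u ≤ ηstar} ∧ O = f xstar + ηstar)
    -- optimal value and solution of the robust problem
    (OU : ℝ) (xU : X)
    (hOU : IsLeast (Set.range fun x => f x + g x) OU)
    (hOUatt : OU = f xU + g xU)
    -- performance measures O_x := f x + q x
    (Oxstar OxU : ℝ)
    (hOxstar : Oxstar = f xstar + q xstar) (hOxU : OxU = f xU + q xU) :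
    O = Oxstar ∧ Oxstar ≤ OxU ∧ OxU ≤ OU :=
  stmt_0_general P f φ ε 𝒰 h𝒰 g hg q hq O xstar ηstar hO hOatt OU xU hOUatt Oxstar OxU hOxstar hOxU
end

section
/- With the setting of the chance-constrained problem min_{x∈X,η} f(x)+η s.t. Pr[min_{y∈𝒴(x,u)} h(y) ≤ η] ≥ 1−ε having optimal solution (x*, η*) and optimal value O, define 𝒰* := { u : min_{y∈𝒴(x*,u)} h(y) ≤ η* }. Then Pr[u ∈ 𝒰*] ≥ 1 − ε and the robust problem min_{x∈X}{ f(x) + max_{u∈𝒰*} min_{y∈𝒴(x,u)} h(y) } has optimal value O_{𝒰*} = O. -/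
open MeasureTheory

/-- Lemma 1, part 2: with `(x*, η*)` optimal for the chance-constrained problem
with value `O`, setting `𝒰* := {u : min_{y ∈ 𝒴(x*,u)} h(y) ≤ η*}`, we get
`Pr[u ∈ 𝒰*] ≥ 1 - ε` and the robust problem with `𝒰*` has optimal value `O`. -/
theorem stmt_1
    {U : Type*} [MeasurableSpace U] (P : Measure U) [IsProbabilityMeasure P]
    {X : Type*} (f : X → ℝ) (φ : X → U → ℝ)
    (ε : ℝ) (hε : ε ∈ Set.Ioo (0 : ℝ) 1)
    -- optimal value and solution of the chance-constrained problem
    (O : ℝ) (xstar : X) (ηstar : ℝ)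
    (hO : IsLeast {v : ℝ | ∃ x η, ENNReal.ofReal (1 - ε) ≤ P {u | φ x u ≤ η} ∧
      v = f x + η} O)
    (hOatt : ENNReal.ofReal (1 - ε) ≤ P {u | φ xstar u ≤ ηstar} ∧ O = f xstar + ηstar)
    -- the induced uncertainty set
    (𝒰star : Set U) (h𝒰star : 𝒰star = {u | φ xstar u ≤ ηstar})
    -- worst-case second-stage cost over 𝒰*, attained for every x
    (g : X → ℝ) (hg : ∀ x, IsGreatest ((φ x) '' 𝒰star) (g x))
    -- optimal value of the robust problem over 𝒰*
    (OUstar : ℝ) (hOUstar : IsLeast (Set.range fun x => f x + g x) OUstar) :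
    ENNReal.ofReal (1 - ε) ≤ P 𝒰star ∧ OUstar = O := by
  subst h𝒰star
  refine ⟨hOatt.1, le_antisymm ?_ ?_⟩
  · -- OUstar ≤ O : use x = xstar
    obtain ⟨u, hu, hgu⟩ := (hg xstar).1
    have h1 : g xstar ≤ ηstar := hgu ▸ hu
    calc OUstar ≤ f xstar + g xstar := hOUstar.2 ⟨xstar, rfl⟩
      _ ≤ f xstar + ηstar := by linarith
      _ = O := hOatt.2.symm
  · -- O ≤ OUstar
    obtain ⟨x, hx⟩ := hOUstar.1
    refine hx ▸ hO.2 ⟨x, g x, ?_, rfl⟩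
    refine le_trans hOatt.1 (measure_mono ?_)
    intro u hu
    exact (hg x).2 ⟨u, hu, rfl⟩
end

section
/- Let e_1, ..., e_{N} be i.i.d. real-valued continuous random variables with distribution induced by a(e) where a is measurable, and let ε, δ ∈ (0,1). Define n* := min{ n ∈ ℕ : Σ_{m=0}^{n−1} C(N,m) (1−ε)^m ε^{N−m} ≥ 1 − δ }, and let α be the n*-th smallest value among a(e_1),...,a(e_N), assuming N ≥ log_{1−ε} δ so that n* exists and n* ≤ N. Then with probability at least 1 − δ over the sample, a fresh independent draw e satisfies Pr[a(e) ≤ α] ≥ 1 − ε. -/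
/-!
Since `μ` has no atoms, it has a `(1 - ε)`-quantile `q` with `μ (Iio q) = μ (Iic q) = 1 - ε`.
If fewer than `n*` of the scores fall below `q`, the `n*`-th smallest score is at least `q`,
hence `μ (Iic α) ≥ μ (Iic q) = 1 - ε`. The number of scores below `q` is binomial with
parameters `N` and `1 - ε`, so this happens with probability
`∑_{m < n*} C(N, m) (1 - ε)^m ε^(N - m)`, which is at least `1 - δ` by the choice of `n*`.
The bound on `N` says `(1 - ε)^N ≤ δ`, which makes `n*` at most `N`.
-/

open MeasureTheory ProbabilityTheory Finset
open scoped ENNReal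

theorem List.le_getElem_of_countP_lt_le {α : Type*} [LinearOrder α] {l : List α}
    (hl : l.Pairwise (· ≤ ·)) {q : α} {k : ℕ} (hk : k < l.length)
    (hcount : l.countP (· < q) ≤ k) : q ≤ l[k] := by
  by_contra! hlt
  have hprefix : ∀ x ∈ l.take (k + 1), x < q := by
    intro x hx
    obtain ⟨j, hj, rfl⟩ := List.mem_iff_getElem.1 hx
    rw [List.getElem_take]
    refine lt_of_le_of_lt ?_ hlt
    rcases (show j ≤ k by simp at hj; omega).eq_or_lt with rfl | hjk
    · exact le_rfl
    · exact List.Pairwise.rel_get_of_lt hl (by simpa using hjk)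
  have hle : (l.take (k + 1)).countP (· < q) ≤ l.countP (· < q) :=
    (List.take_sublist (k + 1) l).countP_le
  rw [List.countP_eq_length.2 (by simpa using hprefix), List.length_take] at hle
  omega

theorem List.countP_ofFn {α : Type*} {N : ℕ} (f : Fin N → α) (p : α → Prop)
    [DecidablePred p] :
    (List.ofFn f).countP (fun x => decide (p x)) = #{i | p (f i)} := by
  rw [← Multiset.coe_countP, ← Fin.univ_val_map, Multiset.countP_map, Finset.card_def,
    Finset.filter_val]

theorem le_getD_mergeSort_ofFn {α : Type*} [LinearOrder α] {N : ℕ} (f : Fin N → α) {q : α}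
    {k : ℕ} (hk : k < N) (hcount : #{i | f i < q} ≤ k) (d : α) :
    q ≤ ((List.ofFn f).mergeSort (· ≤ ·)).getD k d := by
  have hlen : k < ((List.ofFn f).mergeSort (· ≤ ·)).length := by simpa using hk
  rw [List.getD_eq_getElem _ _ hlen]
  refine List.le_getElem_of_countP_lt_le (List.pairwise_mergeSort' _ _) hlen ?_
  rwa [(List.mergeSort_perm _ _).countP_eq, List.countP_ofFn]

theorem ProbabilityTheory.continuous_cdf (μ : Measure ℝ) [IsProbabilityMeasure μ]
    [NullSingletonClass μ] : Continuous (cdf μ) := by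
  refine continuous_iff_continuousAt.2 fun x => ?_
  rw [(monotone_cdf μ).continuousAt_iff_leftLim_eq_rightLim, (cdf μ).rightLim_eq]
  have hjump := (cdf μ).measure_singleton x
  rw [measure_cdf, measure_singleton, eq_comm, ENNReal.ofReal_eq_zero, sub_nonpos] at hjump
  exact le_antisymm ((monotone_cdf μ).leftLim_le le_rfl) hjump

theorem exists_measure_Iic_eq (μ : Measure ℝ) [IsProbabilityMeasure μ] [NullSingletonClass μ]
    {t : ℝ} (ht0 : 0 < t) (ht1 : t < 1) : ∃ q, μ (Set.Iic q) = ENNReal.ofReal t := by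
  obtain ⟨a, ha⟩ := ((tendsto_cdf_atBot μ).eventually (eventually_lt_nhds ht0)).exists
  obtain ⟨b, hb⟩ := ((tendsto_cdf_atTop μ).eventually (eventually_gt_nhds ht1)).exists
  have hab : a ≤ b := le_of_lt <| (monotone_cdf μ).reflect_lt (ha.trans hb)
  obtain ⟨q, -, hq⟩ :=
    intermediate_value_Icc hab (continuous_cdf μ).continuousOn ⟨ha.le, hb.le⟩
  exact ⟨q, by rw [← ofReal_cdf, hq]⟩

theorem sum_range_choose_mul_pow_mul_pow_eq_one_sub {R : Type*} [CommRing R] {x y : R}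
    (h : x + y = 1) (N : ℕ) :
    ∑ m ∈ range N, (N.choose m : R) * x ^ m * y ^ (N - m) = 1 - x ^ N := by
  have hbinom := add_pow x y N
  rw [h, one_pow, sum_range_succ, Nat.choose_self, Nat.sub_self] at hbinom
  rw [eq_sub_iff_add_eq, hbinom, pow_zero, Nat.cast_one, mul_one, mul_one]
  exact congrArg (· + x ^ N) (sum_congr rfl fun m _ => by ring)

theorem ENNReal.ofReal_sum_choose_mul_pow_mul_pow {t : ℝ} (ht0 : 0 ≤ t) (ht1 : t ≤ 1)
    (N n : ℕ) :
    ENNReal.ofReal (∑ m ∈ range n, (N.choose m : ℝ) * t ^ m * (1 - t) ^ (N - m)) =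
      ∑ m ∈ range n,
        (N.choose m : ℝ≥0∞) * ENNReal.ofReal t ^ m * (1 - ENNReal.ofReal t) ^ (N - m) := by
  have h1t : 0 ≤ 1 - t := sub_nonneg.2 ht1
  rw [ENNReal.ofReal_sum_of_nonneg fun m _ => by positivity]
  refine sum_congr rfl fun m _ => ?_
  rw [ENNReal.ofReal_mul (by positivity), ENNReal.ofReal_mul (by positivity),
    ENNReal.ofReal_natCast, ENNReal.ofReal_pow ht0, ENNReal.ofReal_pow h1t,
    ENNReal.ofReal_sub _ ht0, ENNReal.ofReal_one]

theorem measurableSet_mem_iff {β : Type*} [MeasurableSpace β] {s : Set β}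
    (hs : MeasurableSet s) (q : Prop) : MeasurableSet {b | b ∈ s ↔ q} := by
  by_cases hq : q
  · simp only [hq, iff_true]
    exact hs
  · simp only [hq, iff_false]
    exact hs.compl

section IndependentCounts

variable {Ω ι β : Type*} [Fintype ι] {Y : ι → Ω → β} {s : Set β} [DecidablePred (· ∈ s)]

theorem setOf_filter_mem_eq_iInter_preimage (S : Finset ι) :
    {ω | ({i | Y i ω ∈ s} : Finset ι) = S} = ⋂ i, Y i ⁻¹' {b | b ∈ s ↔ i ∈ S} := by
  ext ω; simp [Finset.ext_iff]

theorem setOf_card_filter_mem_eq_biUnion (m : ℕ) :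
    {ω | #{i | Y i ω ∈ s} = m} =
      ⋃ S ∈ powersetCard m univ, {ω | ({i | Y i ω ∈ s} : Finset ι) = S} := by
  ext ω; simp

variable [MeasurableSpace Ω] [MeasurableSpace β]

theorem measurableSet_filter_mem_eq (hmeas : ∀ i, Measurable (Y i)) (hs : MeasurableSet s)
    (S : Finset ι) : MeasurableSet {ω | ({i | Y i ω ∈ s} : Finset ι) = S} := by
  rw [setOf_filter_mem_eq_iInter_preimage]
  exact .iInter fun i => hmeas i (measurableSet_mem_iff hs _)

theorem measurableSet_card_filter_mem_eq (hmeas : ∀ i, Measurable (Y i)) (hs : MeasurableSet s)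
    (m : ℕ) : MeasurableSet {ω | #{i | Y i ω ∈ s} = m} := by
  rw [setOf_card_filter_mem_eq_biUnion]
  exact measurableSet_biUnion _ fun S _ => measurableSet_filter_mem_eq hmeas hs S

variable {P : Measure Ω} [IsProbabilityMeasure P] {p : ℝ≥0∞}

theorem ProbabilityTheory.iIndepFun.measure_filter_mem_eq (hindep : iIndepFun Y P)
    (hmeas : ∀ i, Measurable (Y i)) (hs : MeasurableSet s) (hp : ∀ i, P (Y i ⁻¹' s) = p)
    (S : Finset ι) :
    P {ω | ({i | Y i ω ∈ s} : Finset ι) = S} = p ^ #S * (1 - p) ^ (Fintype.card ι - #S) := by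
  classical
  have hfactor : ∀ i, P (Y i ⁻¹' {b | b ∈ s ↔ i ∈ S}) = if i ∈ S then p else 1 - p := by
    intro i
    by_cases hi : i ∈ S
    · simpa [hi] using hp i
    · simp only [hi, iff_false, if_false, ← hp i]
      exact prob_compl_eq_one_sub (hmeas i hs)
  have hprod :=
    hindep.measure_inter_preimage_eq_mul univ fun i _ => measurableSet_mem_iff hs (i ∈ S)
  simp only [Finset.mem_univ, Set.iInter_true] at hprod
  rw [setOf_filter_mem_eq_iInter_preimage, hprod, prod_congr rfl fun i _ => hfactor i, prod_ite,
    prod_const, prod_const, filter_univ_mem, filter_notMem_eq_sdiff, card_univ_sdiff]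

theorem ProbabilityTheory.iIndepFun.measure_card_filter_mem_eq (hindep : iIndepFun Y P)
    (hmeas : ∀ i, Measurable (Y i)) (hs : MeasurableSet s) (hp : ∀ i, P (Y i ⁻¹' s) = p)
    (m : ℕ) :
    P {ω | #{i | Y i ω ∈ s} = m} =
      (Fintype.card ι).choose m * p ^ m * (1 - p) ^ (Fintype.card ι - m) := by
  rw [setOf_card_filter_mem_eq_biUnion, measure_biUnion_finset]
  · rw [sum_congr rfl fun S hS => by rw [hindep.measure_filter_mem_eq hmeas hs hp S,
      mem_powersetCard_univ.1 hS], sum_const, card_powersetCard, card_univ, nsmul_eq_mul,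
      mul_assoc]
  · exact fun S _ S' _ hne => Set.disjoint_left.2 fun ω h h' => hne (h.symm.trans h')
  · exact fun S _ => measurableSet_filter_mem_eq hmeas hs S

theorem ProbabilityTheory.iIndepFun.measure_card_filter_mem_lt (hindep : iIndepFun Y P)
    (hmeas : ∀ i, Measurable (Y i)) (hs : MeasurableSet s) (hp : ∀ i, P (Y i ⁻¹' s) = p)
    (n : ℕ) :
    P {ω | #{i | Y i ω ∈ s} < n} =
      ∑ m ∈ range n, (Fintype.card ι).choose m * p ^ m * (1 - p) ^ (Fintype.card ι - m) := by
  have hunion :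
      {ω | #{i | Y i ω ∈ s} < n} = ⋃ m ∈ range n, {ω | #{i | Y i ω ∈ s} = m} := by
    ext ω; simp
  rw [hunion, measure_biUnion_finset]
  · exact sum_congr rfl fun m _ => hindep.measure_card_filter_mem_eq hmeas hs hp m
  · exact fun m _ m' _ hne => Set.disjoint_left.2 fun ω h h' => hne (h.symm.trans h')
  · exact fun m _ => measurableSet_card_filter_mem_eq hmeas hs m

end IndependentCounts

/-- Order-statistic coverage guarantee (core of Theorem 1): if `Y i` are the
i.i.d. scores `a(e_i)` with common atomless law `μ`, `n*` the calibration
index and `α` the `n*`-th smallest score, then with probability at least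
`1 - δ` over the sample, a fresh draw satisfies `Pr[a(e) ≤ α] ≥ 1 - ε`. -/
theorem stmt_4
    {Ω : Type*} [MeasurableSpace Ω] (P : Measure Ω) [IsProbabilityMeasure P]
    (ε δ : ℝ) (hε : ε ∈ Set.Ioo (0 : ℝ) 1) (hδ : δ ∈ Set.Ioo (0 : ℝ) 1)
    (N : ℕ) (hN : Real.logb (1 - ε) δ ≤ (N : ℝ))
    (Y : Fin N → Ω → ℝ) (hmeas : ∀ i, Measurable (Y i))
    (hindep : ProbabilityTheory.iIndepFun Y P)
    (μ : Measure ℝ) [IsProbabilityMeasure μ] (hlaw : ∀ i, P.map (Y i) = μ)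
    (hcont : ∀ x : ℝ, μ {x} = 0)
    (nstar : ℕ)
    (hnstar : nstar = sInf {n : ℕ | 1 - δ ≤
      ∑ m ∈ Finset.range n, (N.choose m : ℝ) * (1 - ε) ^ m * ε ^ (N - m)})
    (α : Ω → ℝ)
    (hα : ∀ ω, α ω =
      ((List.ofFn fun i => Y i ω).mergeSort (· ≤ ·)).getD (nstar - 1) 0) :
    ENNReal.ofReal (1 - δ) ≤
      P {ω | ENNReal.ofReal (1 - ε) ≤ μ (Set.Iic (α ω))} := by
  obtain ⟨hε0, hε1⟩ := hε
  obtain ⟨hδ0, hδ1⟩ := hδ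
  have : NullSingletonClass μ := ⟨hcont⟩
  obtain ⟨q, hq⟩ := exists_measure_Iic_eq μ (sub_pos.2 hε1) (by linarith)
  have hp : ∀ i, P (Y i ⁻¹' Set.Iio q) = ENNReal.ofReal (1 - ε) := fun i => by
    rw [← Measure.map_apply (hmeas i) measurableSet_Iio, hlaw i, measure_congr Iio_ae_eq_Iic,
      hq]
  have hpow : (1 - ε) ^ N ≤ δ := by
    have := (Real.logb_le_iff_le_rpow_of_base_lt_one (by linarith) (by linarith) hδ0).1 hN
    rwa [Real.rpow_natCast] at this
  have hN_mem : 1 - δ ≤ ∑ m ∈ range N, (N.choose m : ℝ) * (1 - ε) ^ m * ε ^ (N - m) := by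
    rw [sum_range_choose_mul_pow_mul_pow_eq_one_sub (sub_add_cancel 1 ε)]
    linarith
  have hn_mem := hnstar ▸ Nat.sInf_mem ⟨N, hN_mem⟩
  have hn_le : nstar ≤ N := hnstar ▸ Nat.sInf_le hN_mem
  have hn_pos : 0 < nstar := Nat.pos_of_ne_zero fun h => by
    simp only [h, Set.mem_ofPred_eq, range_zero, sum_empty] at hn_mem
    linarith
  have hsub : {ω | #{i | Y i ω ∈ Set.Iio q} < nstar} ⊆
      {ω | ENNReal.ofReal (1 - ε) ≤ μ (Set.Iic (α ω))} := fun ω hω => by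
    have hqα : q ≤ α ω := hα ω ▸ le_getD_mergeSort_ofFn _ (by omega) (by simp at hω; omega) 0
    exact hq ▸ measure_mono (Set.Iic_subset_Iic.2 hqα)
  calc ENNReal.ofReal (1 - δ)
      ≤ ENNReal.ofReal
          (∑ m ∈ range nstar, (N.choose m : ℝ) * (1 - ε) ^ m * (1 - (1 - ε)) ^ (N - m)) := by
        rw [sub_sub_cancel]
        exact ENNReal.ofReal_le_ofReal hn_mem
    _ = P {ω | #{i | Y i ω ∈ Set.Iio q} < nstar} := by
        rw [ENNReal.ofReal_sum_choose_mul_pow_mul_pow (by linarith) (by linarith),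
          hindep.measure_card_filter_mem_lt hmeas measurableSet_Iio hp, Fintype.card_fin]
    _ ≤ _ := measure_mono hsub
end

section
/- Under the hypotheses of Theorem 2 of the paper (uncertainty set reconstruction), on the event that Pr[u ∈ 𝒰_2] ≥ 1−ε, the optimal values satisfy O ≤ O_{x_1} ≤ O_{𝒰_2} ≤ f(x_0) + β, where x_1 is optimal for the robust problem with uncertainty set 𝒰_2 := { u ∈ 𝒰_0 : min_{y∈𝒴(x_0,u)} h(y) ≤ β }, O is the optimal value of the chance-constrained problem, O_{x_1} is the evaluated cost of x_1, and O_{𝒰_2} is the robust optimal value. -/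
open MeasureTheory

/-- Theorem 2, part (23b): on the event `Pr[u ∈ 𝒰₂] ≥ 1 - ε`, the optimal
values satisfy `O ≤ O_{x₁} ≤ O_{𝒰₂} ≤ f(x₀) + β`, where
`𝒰₂ = {u ∈ 𝒰₀ : min_{y ∈ 𝒴(x₀,u)} h(y) ≤ β}` and `x₁` is robust-optimal for `𝒰₂`. -/
theorem stmt_11
    {U : Type*} [MeasurableSpace U] (P : Measure U) [IsProbabilityMeasure P]
    {X : Type*} (f : X → ℝ) (φ : X → U → ℝ)
    (ε : ℝ) (hε : ε ∈ Set.Ioo (0 : ℝ) 1)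
    (𝒰₀ : Set U) (hsupp : P 𝒰₀ = 1)
    (x₀ : X) (β : ℝ)
    (𝒰₂ : Set U) (h𝒰₂ : 𝒰₂ = {u ∈ 𝒰₀ | φ x₀ u ≤ β})
    -- the event of Theorem 2: the reconstructed set has coverage at least 1 - ε
    (hcov : ENNReal.ofReal (1 - ε) ≤ P 𝒰₂)
    -- worst-case second-stage cost over 𝒰₂, attained for every x
    (g : X → ℝ) (hg : ∀ x, IsGreatest ((φ x) '' 𝒰₂) (g x))
    -- (1-ε)-quantile of the second-stage cost, attained for every x
    (q : X → ℝ)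
    (hq : ∀ x, IsLeast {η : ℝ | ENNReal.ofReal (1 - ε) ≤ P {u | φ x u ≤ η}} (q x))
    -- optimal value of the chance-constrained problem
    (O : ℝ)
    (hO : IsLeast {vv : ℝ | ∃ x η, ENNReal.ofReal (1 - ε) ≤ P {u | φ x u ≤ η} ∧
      vv = f x + η} O)
    -- optimal value and solution of the robust problem over 𝒰₂
    (OU₂ : ℝ) (x₁ : X)
    (hOU₂ : IsLeast (Set.range fun x => f x + g x) OU₂)
    (hx₁ : OU₂ = f x₁ + g x₁)
    -- evaluated performance of x₁
    (Ox₁ : ℝ) (hOx₁ : Ox₁ = f x₁ + q x₁) :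
    O ≤ Ox₁ ∧ Ox₁ ≤ OU₂ ∧ OU₂ ≤ f x₀ + β := by
  refine ⟨?_, ?_, ?_⟩
  · exact hO.2 ⟨x₁, q x₁, (hq x₁).1, hOx₁⟩
  · have hqg : q x₁ ≤ g x₁ := by
      apply (hq x₁).2
      refine le_trans hcov (measure_mono ?_)
      intro u hu
      exact (hg x₁).2 ⟨u, hu, rfl⟩
    rw [hOx₁, hx₁]; linarith
  · have hgb : g x₀ ≤ β := by
      obtain ⟨u, hu, hgu⟩ := (hg x₀).1
      rw [h𝒰₂] at hu
      rw [← hgu]; exact hu.2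
    calc OU₂ ≤ f x₀ + g x₀ := hOU₂.2 ⟨x₀, rfl⟩
      _ ≤ f x₀ + β := by linarith
end
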